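/- Let k ≥ 0 and n ≥ 1 be integers, let p be a prime, let α be an integer with α ≡ 1 (mod p), and let ℓ = ν_p(n). Then the integer Σ_{i=k}^{n-1} i^(k̲) · α^(i-k) is congruent modulo p^ℓ to the rational number ((n-1)^(k̲)/(k+1)) · n (which has nonnegative p-adic valuation, so the congruence makes sense in the ring of p-local rationals). -/

import Mathlib

/-!
Write `α = A + 1` with `p ∣ A`. Expanding `(A + 1)^(i-k)` binomially, swapping the sums and
applying the hockey-stick identity turns the sum into `∑_t (k+t)^(k̲) · C(n, k+t+1) · A^t`.
The `t = 0` term is `k! · C(n, k+1) = (n-1)^(k̲) · n / (k+1)`. For `t ≥ 1` put `j = k + t + 1`: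
from `C(n, j) · j = n · C(n-1, j-1)` we get `ν(C(n, j)) ≥ ν(n) - ν(j)`, while
`ν(j) - 1 ≤ ν((k+t)!) = ν((k+t)^(k̲)) + ν(t!)` and `ν(t!) < t ≤ ν(A^t)`, so the term is
divisible by `p^ν(n)`.
-/

open Finset Nat

theorem add_one_pow_eq_sum_range_choose_mul {R : Type*} [CommSemiring R] (x : R) {s M : ℕ}
    (hsM : s < M) : (x + 1) ^ s = ∑ t ∈ range M, (s.choose t : R) * x ^ t := by
  calc (x + 1) ^ s = ∑ t ∈ range (s + 1), (s.choose t : R) * x ^ t := by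
        simp [add_pow, mul_comm]
    _ = _ := sum_subset (range_subset_range.2 hsM) fun t _ ht => by
        simp [choose_eq_zero_of_lt (show s < t by simpa using ht)]

namespace Nat

theorem descFactorial_mul_choose_eq (k s t : ℕ) :
    (k + s).descFactorial k * s.choose t = (k + t).descFactorial k * (k + s).choose (k + t) := by
  have h := choose_mul (n := k + s) (le_add_right k t)
  simp only [Nat.add_sub_cancel_left] at h
  rw [descFactorial_eq_factorial_mul_choose, descFactorial_eq_factorial_mul_choose, mul_assoc,
    ← h, mul_assoc, mul_comm ((k + t).choose k)]

theorem sum_range_add_choose_of_le {m j : ℕ} (hmj : m ≤ j) (N : ℕ) :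
    ∑ s ∈ range N, (m + s).choose j = (m + N).choose (j + 1) := by
  induction N with
  | zero => simp [choose_eq_zero_of_lt (lt_succ_of_le hmj)]
  | succ N ih => rw [sum_range_succ, ih, ← Nat.add_assoc, choose_succ_succ', add_comm]

theorem cast_sub_one_descFactorial_div_mul {K : Type*} [Field K] [CharZero K] (n k : ℕ) :
    ((n - 1).descFactorial k : K) / (k + 1) * n = k ! * n.choose (k + 1) := by
  rw [div_mul_eq_mul_div, div_eq_iff (cast_add_one_ne_zero k)]
  norm_cast
  cases n with
  | zero => simp
  | succ n =>
    rw [Nat.add_sub_cancel, mul_comm, ← succ_descFactorial_succ,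
      descFactorial_eq_factorial_mul_choose, factorial_succ]
    ring

end Nat

theorem sum_Ico_descFactorial_mul_add_one_pow {R : Type*} [CommSemiring R] (k n : ℕ) (x : R) :
    ∑ i ∈ Ico k n, (i.descFactorial k : R) * (x + 1) ^ (i - k) =
      ∑ t ∈ range n, (((k + t).descFactorial k * n.choose (k + t + 1) : ℕ) : R) * x ^ t := by
  rcases le_total n k with hnk | hkn
  · rw [Ico_eq_empty_of_le hnk, sum_empty, eq_comm]
    exact sum_eq_zero fun t _ => by simp [choose_eq_zero_of_lt (show n < k + t + 1 by omega)]
  obtain ⟨N, rfl⟩ := Nat.exists_eq_add_of_le hkn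
  calc ∑ i ∈ Ico k (k + N), (i.descFactorial k : R) * (x + 1) ^ (i - k)
      = ∑ s ∈ range N, ((k + s).descFactorial k : R) * (x + 1) ^ s := by
        simp [sum_Ico_eq_sum_range]
    _ = ∑ s ∈ range N, ∑ t ∈ range (k + N),
          (((k + s).descFactorial k * s.choose t : ℕ) : R) * x ^ t := by
        refine sum_congr rfl fun s hs => ?_
        rw [add_one_pow_eq_sum_range_choose_mul x (M := k + N) (by simp at hs; omega), mul_sum]
        push_cast
        simp only [mul_assoc]
    _ = _ := by
        rw [sum_comm]
        refine sum_congr rfl fun t _ => ?_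
        rw [← sum_mul, ← cast_sum]
        simp only [descFactorial_mul_choose_eq, ← mul_sum,
          sum_range_add_choose_of_le (le_add_right k t)]

section padicValNat

variable {p : ℕ} [Fact p.Prime]

theorem padicValNat_le_padicValNat_choose_add {n j : ℕ} (hj : j ≠ 0) (hnj : n.choose j ≠ 0) :
    padicValNat p n ≤ padicValNat p (n.choose j) + padicValNat p j := by
  obtain ⟨j, rfl⟩ : ∃ j', j = j' + 1 := ⟨j - 1, by omega⟩
  have hjn : j + 1 ≤ n := by_contra fun h => hnj (choose_eq_zero_of_lt (by omega))
  obtain ⟨n, rfl⟩ : ∃ n', n = n' + 1 := ⟨n - 1, by omega⟩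
  have hC : n.choose j ≠ 0 := (choose_pos (by omega)).ne'
  have hval := congrArg (padicValNat p) (add_one_mul_choose_eq n j)
  rw [padicValNat.mul (by omega) hC, padicValNat.mul hnj (by omega)] at hval
  omega

theorem padicValNat_add_one_le_padicValNat_factorial_add_one (m : ℕ) :
    padicValNat p (m + 1) ≤ padicValNat p (m !) + 1 := by
  set v := padicValNat p (m + 1)
  rcases eq_or_ne v 0 with hv | hv
  · omega
  suffices p ^ (v - 1) ∣ (m !) by
    have := (padicValNat_dvd_iff_le (factorial_ne_zero m)).1 this
    omega
  have hp := (Fact.out : p.Prime).one_lt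
  refine dvd_factorial (by positivity) (le_of_lt_succ ?_)
  calc p ^ (v - 1) < p ^ v := pow_lt_pow_right₀ hp (by omega)
    _ ≤ m + 1 := le_of_dvd (succ_pos m) pow_padicValNat_dvd

theorem pow_padicValNat_dvd_descFactorial_mul_choose_mul_pow (n k : ℕ) {t : ℕ} (ht : t ≠ 0)
    {A : ℤ} (hA : (p : ℤ) ∣ A) :
    (p : ℤ) ^ padicValNat p n ∣
      (((k + t).descFactorial k * n.choose (k + t + 1) : ℕ) : ℤ) * A ^ t := by
  suffices p ^ padicValNat p n ∣ (k + t).descFactorial k * n.choose (k + t + 1) * p ^ t by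
    refine (Int.natCast_dvd_natCast.2 this).trans ?_
    push_cast
    exact mul_dvd_mul_left _ (pow_dvd_pow_of_dvd hA t)
  by_cases hC : n.choose (k + t + 1) = 0
  · simp [hC]
  have hD : (k + t).descFactorial k ≠ 0 := by simp [descFactorial_eq_zero_iff_lt]
  have hfac : t ! * (k + t).descFactorial k = (k + t)! := by
    simpa using factorial_mul_descFactorial (le_add_right k t)
  have hval := congrArg (padicValNat p) hfac
  rw [padicValNat.mul (factorial_ne_zero t) hD] at hval
  have hchoose := padicValNat_le_padicValNat_choose_add (p := p) (j := k + t + 1) (by omega) hC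
  have hj := padicValNat_add_one_le_padicValNat_factorial_add_one (p := p) (k + t)
  have ht' := padicValNat_factorial_lt_of_ne_zero p ht
  have hpt : p ^ t ≠ 0 := pow_ne_zero t (Fact.out : p.Prime).ne_zero
  rw [padicValNat_dvd_iff_le (mul_ne_zero (mul_ne_zero hD hC) hpt),
    padicValNat.mul (mul_ne_zero hD hC) hpt, padicValNat.mul hD hC, padicValNat.prime_pow]
  omega

theorem eq_zero_or_le_padicValRat_of_pow_dvd {ℓ : ℕ} {D : ℤ} (h : (p : ℤ) ^ ℓ ∣ D) :
    (D : ℚ) = 0 ∨ (ℓ : ℤ) ≤ padicValRat p D := by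
  rcases (padicValInt_dvd_iff ℓ D).1 h with h0 | hle
  · simp [h0]
  · rw [padicValRat.of_int]
    exact .inr (by exact_mod_cast hle)

end padicValNat

/-- Lemma 3. Let `k ≥ 0`, `n ≥ 1`, let `p` be a prime, let `α ∈ ℤ` with
`α ≡ 1 (mod p)`, and let `ℓ = ν_p(n)`. Then the integer
`∑_{i=k}^{n-1} i^(k̲) · α^(i-k)` is congruent modulo `p^ℓ` to the rational
number `((n-1)^(k̲)/(k+1)) · n`: that is, either the two quantities are equal
or the difference has `p`-adic valuation at least `ℓ`. -/
theorem sum_descFactorial_mul_pow_modEq_descFactorial_div_mul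
    (k n : ℕ) (hn : 1 ≤ n) (p : ℕ) (hp : Nat.Prime p)
    (α : ℤ) (hα : α ≡ 1 [ZMOD (p : ℤ)]) (ℓ : ℕ) (hℓ : ℓ = padicValNat p n) :
    ((∑ i ∈ Finset.Ico k n, (i.descFactorial k : ℚ) * (α : ℚ) ^ (i - k)) -
        ((n - 1).descFactorial k : ℚ) / (k + 1) * n = 0) ∨
      (ℓ : ℤ) ≤ padicValRat p
        ((∑ i ∈ Finset.Ico k n, (i.descFactorial k : ℚ) * (α : ℚ) ^ (i - k)) -
          ((n - 1).descFactorial k : ℚ) / (k + 1) * n) := by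
  have : Fact p.Prime := ⟨hp⟩
  subst hℓ
  obtain ⟨A, rfl⟩ : ∃ A, α = A + 1 := ⟨α - 1, by ring⟩
  have hA : (p : ℤ) ∣ A := by simpa using hα.symm.dvd
  rw [cast_sub_one_descFactorial_div_mul]
  obtain ⟨m, rfl⟩ : ∃ m, n = m + 1 := ⟨n - 1, by omega⟩
  set D : ℤ := ∑ t ∈ range m,
    (((k + (t + 1)).descFactorial k * (m + 1).choose (k + (t + 1) + 1) : ℕ) : ℤ) * A ^ (t + 1)
  have hD : (∑ i ∈ Ico k (m + 1), (i.descFactorial k : ℚ) * ((A + 1 : ℤ) : ℚ) ^ (i - k)) -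
      k ! * (m + 1).choose (k + 1) = D := by
    push_cast [D]
    rw [sum_Ico_descFactorial_mul_add_one_pow, sum_range_succ']
    simp [descFactorial_self]
  rw [hD]
  exact eq_zero_or_le_padicValRat_of_pow_dvd
    (dvd_sum fun t _ => pow_padicValNat_dvd_descFactorial_mul_choose_mul_pow _ k t.succ_ne_zero hA)
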